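/- arXiv:1901.09877 — 7 statements merged into one kernel-verified Lean document; each statement's English description precedes it below -/
import Mathlib

section
/- Let G be a finite simple graph on a vertex set V and let γ(G) denote the minimum size of a dominating set of G. Let S be a stable dominating-pair solution of G with a valid level assignment. Then for every level l, the number of dominating pairs of S assigned to level l is at most 2^10 · γ(G). -/
open Finset

/-- `D` is a dominating set of `G`: every vertex is in `D` or adjacent to a vertex of `D`. -/
def IsDomSet {V : Type*} (G : SimpleGraph V) (D : Finset V) : Prop :=
  ∀ v : V, v ∈ D ∨ ∃ u ∈ D, G.Adj u v

/-- The domination number `γ(G)`: the minimum size of a dominating set of `G`. -/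
noncomputable def domNum {V : Type*} (G : SimpleGraph V) : ℕ :=
  sInf {k | ∃ D : Finset V, IsDomSet G D ∧ D.card = k}

/-- The set `V_l` of vertices dominated at level `l`. -/
def levelSet {V : Type*} [DecidableEq V] (S : Finset (V × Finset V))
    (lvl : V × Finset V → ℕ) (l : ℕ) : Finset V :=
  (S.filter (fun p => lvl p = l)).biUnion Prod.snd

theorem stmt0 {V : Type*} [Fintype V] [DecidableEq V] (G : SimpleGraph V)
    [DecidableRel G.Adj]
    (S : Finset (V × Finset V)) (lvl : V × Finset V → ℕ)
    -- each pair `(v, Dom v)` has `Dom v` a nonempty subset of the closed neighborhood of `v`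
    (hpairs : ∀ p ∈ S, p.2.Nonempty ∧ ∀ x ∈ p.2, x = p.1 ∨ G.Adj p.1 x)
    -- the sets `Dom v` partition `V`: every vertex lies in exactly one of them
    (hpart : ∀ x : V, ∃! p : V × Finset V, p ∈ S ∧ x ∈ p.2)
    -- the level assignment is valid: `|Dom v| ∈ [2^(l-10), 2^l]`
    (hvalid : ∀ p ∈ S, p.2.card ≤ 2 ^ lvl p ∧ 2 ^ lvl p ≤ 2 ^ 10 * p.2.card)
    -- stability: for every vertex `u` and level `l`, `|N[u] ∩ V_l| ≤ 2^l`
    (hstable : ∀ (u : V) (l : ℕ),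
      ((insert u (G.neighborFinset u)) ∩ levelSet S lvl l).card ≤ 2 ^ l) :
    ∀ l : ℕ, (S.filter (fun p => lvl p = l)).card ≤ 2 ^ 10 * domNum G := by
  intro l
  have hne : {k | ∃ D : Finset V, IsDomSet G D ∧ D.card = k}.Nonempty :=
    ⟨(Finset.univ : Finset V).card, Finset.univ, fun v => Or.inl (mem_univ v), rfl⟩
  obtain ⟨D, hD, hDcard⟩ := Nat.sInf_mem hne
  set T := S.filter (fun p => lvl p = l) with hT
  have hTS : ∀ p ∈ T, p ∈ S ∧ lvl p = l := by
    intro p hp; exact Finset.mem_filter.mp hp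
  -- cardinality of the level set as a sum
  have hcard : (levelSet S lvl l).card = ∑ p ∈ T, p.2.card := by
    apply Finset.card_biUnion
    intro p hp q hq hpq
    rw [Function.onFun, Finset.disjoint_left]
    intro x hxp hxq
    obtain ⟨r, -, hr⟩ := hpart x
    exact hpq ((hr p ⟨(hTS p hp).1, hxp⟩).trans (hr q ⟨(hTS q hq).1, hxq⟩).symm)
  -- lower bound
  have hlow : 2 ^ l * T.card ≤ 2 ^ 10 * (levelSet S lvl l).card := by
    have he : 2 ^ l * T.card = ∑ _p ∈ T, 2 ^ l := by
      rw [Finset.sum_const, smul_eq_mul, mul_comm]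
    rw [he, hcard, Finset.mul_sum]
    apply Finset.sum_le_sum
    intro p hp
    have h := (hvalid p (hTS p hp).1).2
    rwa [(hTS p hp).2] at h
  -- upper bound via the dominating set
  have hsub : levelSet S lvl l ⊆
      D.biUnion (fun u => (insert u (G.neighborFinset u)) ∩ levelSet S lvl l) := by
    intro x hx
    rcases hD x with hxD | ⟨u, huD, hadj⟩
    · exact Finset.mem_biUnion.mpr ⟨x, hxD, Finset.mem_inter.mpr ⟨Finset.mem_insert_self _ _, hx⟩⟩
    · exact Finset.mem_biUnion.mpr ⟨u, huD,
        Finset.mem_inter.mpr ⟨Finset.mem_insert_of_mem ((G.mem_neighborFinset u x).mpr hadj), hx⟩⟩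
  have hup : (levelSet S lvl l).card ≤ D.card * 2 ^ l := by
    calc (levelSet S lvl l).card
        ≤ (D.biUnion (fun u => (insert u (G.neighborFinset u)) ∩ levelSet S lvl l)).card :=
          Finset.card_le_card hsub
      _ ≤ ∑ u ∈ D, ((insert u (G.neighborFinset u)) ∩ levelSet S lvl l).card :=
          Finset.card_biUnion_le
      _ ≤ ∑ _u ∈ D, 2 ^ l := Finset.sum_le_sum fun u _ => hstable u l
      _ = D.card * 2 ^ l := by rw [Finset.sum_const, smul_eq_mul]
  have hfinal : 2 ^ l * T.card ≤ 2 ^ l * (2 ^ 10 * domNum G) := by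
    calc 2 ^ l * T.card ≤ 2 ^ 10 * (levelSet S lvl l).card := hlow
      _ ≤ 2 ^ 10 * (D.card * 2 ^ l) := Nat.mul_le_mul_left _ hup
      _ = 2 ^ l * (2 ^ 10 * D.card) := by ring
      _ = 2 ^ l * (2 ^ 10 * domNum G) := by rw [hDcard]; rfl
  exact Nat.le_of_mul_le_mul_left hfinal (Nat.pow_pos (by norm_num))
end

section
/- Let G be a finite simple graph on n ≥ 2 vertices and let γ(G) denote the minimum size of a dominating set of G. Let S be a stable dominating-pair solution of G with a valid level assignment. Then the total number of dominating pairs in S is at most 2^10 · (log₂ n + 11) · γ(G). -/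
open Finset

theorem stmt1 {V : Type*} [Fintype V] [DecidableEq V] (G : SimpleGraph V)
    [DecidableRel G.Adj] (hn : 2 ≤ Fintype.card V)
    (S : Finset (V × Finset V)) (lvl : V × Finset V → ℕ)
    -- each pair `(v, Dom v)` has `Dom v` a nonempty subset of the closed neighborhood of `v`
    (hpairs : ∀ p ∈ S, p.2.Nonempty ∧ ∀ x ∈ p.2, x = p.1 ∨ G.Adj p.1 x)
    -- the sets `Dom v` partition `V`: every vertex lies in exactly one of them
    (hpart : ∀ x : V, ∃! p : V × Finset V, p ∈ S ∧ x ∈ p.2)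
    -- the level assignment is valid: `|Dom v| ∈ [2^(l-10), 2^l]`
    (hvalid : ∀ p ∈ S, p.2.card ≤ 2 ^ lvl p ∧ 2 ^ lvl p ≤ 2 ^ 10 * p.2.card)
    -- stability: for every vertex `u` and level `l`, `|N[u] ∩ V_l| ≤ 2^l`
    (hstable : ∀ (u : V) (l : ℕ),
      ((insert u (G.neighborFinset u)) ∩ levelSet S lvl l).card ≤ 2 ^ l) :
    S.card ≤ 2 ^ 10 * (Nat.log 2 (Fintype.card V) + 11) * domNum G := by
  classical
  set n := Fintype.card V with hn'
  set L := Nat.log 2 n + 11 with hL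
  obtain ⟨D, hD, hDcard⟩ : ∃ D : Finset V, IsDomSet G D ∧ D.card = domNum G := by
    have : domNum G ∈ {k | ∃ D : Finset V, IsDomSet G D ∧ D.card = k} := by
      apply Nat.sInf_mem
      exact ⟨(Finset.univ : Finset V).card, Finset.univ,
        fun v => Or.inl (Finset.mem_univ v), rfl⟩
    exact this
  have hlvl : ∀ p ∈ S, lvl p ∈ Finset.range L := by
    intro p hp
    rw [Finset.mem_range]
    have h1 : 2 ^ lvl p ≤ 2 ^ 10 * p.2.card := (hvalid p hp).2
    have h2 : p.2.card ≤ n := Finset.card_le_univ _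
    have h3 : 2 ^ lvl p < 2 ^ L := by
      calc 2 ^ lvl p ≤ 2 ^ 10 * n := le_trans h1 (Nat.mul_le_mul_left _ h2)
        _ < 2 ^ 10 * 2 ^ (Nat.log 2 n + 1) := by
            exact (Nat.mul_lt_mul_left (by positivity)).mpr
              (Nat.lt_pow_succ_log_self (by norm_num) n)
        _ = 2 ^ L := by rw [← pow_add]; congr 1; omega
    exact (Nat.pow_lt_pow_iff_right (by norm_num)).mp h3
  have hdisj : ∀ p ∈ S, ∀ q ∈ S, p ≠ q → Disjoint p.2 q.2 := by
    intro p hp q hq hpq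
    rw [Finset.disjoint_left]
    intro x hxp hxq
    obtain ⟨r, _, hru⟩ := hpart x
    exact hpq ((hru p ⟨hp, hxp⟩).trans (hru q ⟨hq, hxq⟩).symm)
  have hfiber : ∀ l, (S.filter (fun p => lvl p = l)).card ≤ 2 ^ 10 * domNum G := by
    intro l
    set T := S.filter (fun p => lvl p = l) with hT
    have hVl : (levelSet S lvl l).card ≤ domNum G * 2 ^ l := by
      have hsub : levelSet S lvl l ⊆
          D.biUnion (fun u => (insert u (G.neighborFinset u)) ∩ levelSet S lvl l) := by
        intro x hx
        rcases hD x with hxD | ⟨u, huD, hadj⟩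
        · exact Finset.mem_biUnion.mpr ⟨x, hxD,
            Finset.mem_inter.mpr ⟨Finset.mem_insert_self _ _, hx⟩⟩
        · exact Finset.mem_biUnion.mpr ⟨u, huD, Finset.mem_inter.mpr
            ⟨Finset.mem_insert_of_mem ((G.mem_neighborFinset u x).mpr hadj), hx⟩⟩
      calc (levelSet S lvl l).card ≤ _ := Finset.card_le_card hsub
        _ ≤ ∑ u ∈ D, ((insert u (G.neighborFinset u)) ∩ levelSet S lvl l).card :=
            Finset.card_biUnion_le
        _ ≤ ∑ u ∈ D, 2 ^ l := Finset.sum_le_sum (fun u _ => hstable u l)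
        _ = domNum G * 2 ^ l := by rw [Finset.sum_const, smul_eq_mul, hDcard]
    have hVlcard : (levelSet S lvl l).card = ∑ p ∈ T, p.2.card := by
      rw [levelSet]
      exact Finset.card_biUnion (fun p hp q hq hpq =>
        hdisj p (Finset.mem_filter.mp hp).1 q (Finset.mem_filter.mp hq).1 hpq)
    have key : T.card * 2 ^ l ≤ (2 ^ 10 * domNum G) * 2 ^ l := by
      calc T.card * 2 ^ l = ∑ _p ∈ T, 2 ^ l := by rw [Finset.sum_const, smul_eq_mul]
        _ = ∑ p ∈ T, 2 ^ lvl p := Finset.sum_congr rfl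
            (fun p hp => by rw [(Finset.mem_filter.mp hp).2])
        _ ≤ ∑ p ∈ T, 2 ^ 10 * p.2.card := Finset.sum_le_sum
            (fun p hp => (hvalid p (Finset.mem_filter.mp hp).1).2)
        _ = 2 ^ 10 * ∑ p ∈ T, p.2.card := by rw [Finset.mul_sum]
        _ = 2 ^ 10 * (levelSet S lvl l).card := by rw [hVlcard]
        _ ≤ 2 ^ 10 * (domNum G * 2 ^ l) := Nat.mul_le_mul_left _ hVl
        _ = (2 ^ 10 * domNum G) * 2 ^ l := by ring
    exact Nat.le_of_mul_le_mul_right key (by positivity)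
  calc S.card = ∑ l ∈ Finset.range L, (S.filter (fun p => lvl p = l)).card :=
        Finset.card_eq_sum_card_fiberwise hlvl
    _ ≤ ∑ _l ∈ Finset.range L, 2 ^ 10 * domNum G :=
        Finset.sum_le_sum (fun l _ => hfiber l)
    _ = L * (2 ^ 10 * domNum G) := by rw [Finset.sum_const, Finset.card_range, smul_eq_mul]
    _ = 2 ^ 10 * L * domNum G := by ring
end

section
/- Let G be a finite connected simple graph with vertex set V, let D ⊆ V be a dominating set of G, and let C ⊆ V \ D be a set such that the induced subgraph G[C ∪ D] is connected and C is inclusion-minimal with this property (no proper subset C' ⊊ C satisfies that G[C' ∪ D] is connected). Then |C| ≤ 2|D|. -/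
open Finset

private def Reach {V : Type*} [DecidableEq V] (G : SimpleGraph V) (D : Finset V) (d0 : V)
    (S : Finset V) (v : V) : Prop :=
  ∃ p : G.Walk d0 v, ∀ x ∈ p.support, x ∈ S ∪ D

private lemma Reach.mono {V : Type*} [DecidableEq V] {G : SimpleGraph V} {D : Finset V} {d0 : V}
    {S T : Finset V} {v : V} (h : Reach G D d0 S v) (hST : S ⊆ T) : Reach G D d0 T v := by
  obtain ⟨p, hp⟩ := h
  refine ⟨p, fun x hx => ?_⟩
  rcases Finset.mem_union.1 (hp x hx) with h' | h'
  exacts [Finset.mem_union_left _ (hST h'), Finset.mem_union_right _ h']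

private lemma lemA {V : Type*} (G : SimpleGraph V) (s : Set V) (d0 : V) (hd0 : d0 ∈ s)
    (h : ∀ v ∈ s, ∃ p : G.Walk d0 v, ∀ x ∈ p.support, x ∈ s) :
    (G.induce s).Connected := by
  apply G.induce_connected_of_patches d0 hd0
  intro v hv
  obtain ⟨p, hp⟩ := h v hv
  exact ⟨{x | x ∈ p.support}, fun x hx => hp x hx, p.start_mem_support, p.end_mem_support,
    (p.connected_induce_support _ _)⟩

private lemma lemB {V : Type*} (G : SimpleGraph V) (s : Set V) (h : (G.induce s).Connected)
    (u v : V) (hu : u ∈ s) (hv : v ∈ s) : ∃ p : G.Walk u v, ∀ x ∈ p.support, x ∈ s := by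
  rw [SimpleGraph.connected_induce_iff,
    SimpleGraph.Subgraph.connected_iff_forall_exists_walk_subgraph] at h
  obtain ⟨p, hp⟩ := h.2 (u := u) (v := v) (by simpa) (by simpa)
  refine ⟨p, fun x hx => ?_⟩
  have := hp.1 ((p.mem_verts_toSubgraph).2 hx)
  simpa using this

private lemma aux {V : Type*} [Fintype V] [DecidableEq V] (G : SimpleGraph V)
    (D C : Finset V) (d0 : V) (hd0 : d0 ∈ D)
    (hD : ∀ v : V, v ∈ D ∨ ∃ u ∈ D, G.Adj u v)
    (hCD : ∀ v ∈ C, v ∉ D)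
    (hwalk : ∀ b ∈ D, ∃ p : G.Walk d0 b, ∀ x ∈ p.support, x ∈ C ∪ D) :
    ∃ S' : Finset V, S' ⊆ C ∧ (∀ d ∈ D, Reach G D d0 S' d) ∧ S'.card + 2 ≤ 2 * D.card := by
  classical
  suffices h : ∀ n : ℕ, ∀ S : Finset V, S ⊆ C → Reach G D d0 S d0 →
      S.card + 2 ≤ 2 * (D.filter (Reach G D d0 S)).card →
      (D \ D.filter (Reach G D d0 S)).card ≤ n →
      ∃ S' : Finset V, S' ⊆ C ∧ (∀ d ∈ D, Reach G D d0 S' d) ∧ S'.card + 2 ≤ 2 * D.card by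
    have hr0 : Reach G D d0 (∅ : Finset V) d0 :=
      ⟨SimpleGraph.Walk.nil, by simp [hd0]⟩
    refine h (D \ D.filter (Reach G D d0 ∅)).card ∅ (Finset.empty_subset _) hr0 ?_ le_rfl
    have hmem : d0 ∈ D.filter (Reach G D d0 ∅) := Finset.mem_filter.2 ⟨hd0, hr0⟩
    have := Finset.card_pos.2 ⟨d0, hmem⟩
    simp only [Finset.card_empty]
    omega
  intro n
  induction n with
  | zero =>
    intro S hSC _ hinv hcnt
    have hall : ∀ d ∈ D, Reach G D d0 S d := by
      intro d hdD
      by_contra hnd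
      have hmem : d ∈ D \ D.filter (Reach G D d0 S) :=
        Finset.mem_sdiff.2 ⟨hdD, fun h => hnd ((Finset.mem_filter.1 h).2)⟩
      have := Finset.card_pos.2 ⟨d, hmem⟩
      omega
    refine ⟨S, hSC, hall, ?_⟩
    have := Finset.card_le_card (Finset.filter_subset (Reach G D d0 S) D)
    omega
  | succ n ih =>
    intro S hSC hreach0 hinv hcnt
    by_cases hall : ∀ d ∈ D, Reach G D d0 S d
    · refine ⟨S, hSC, hall, ?_⟩
      have := Finset.card_le_card (Finset.filter_subset (Reach G D d0 S) D)
      omega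
    push_neg at hall
    obtain ⟨b0, hb0D, hb0n⟩ := hall
    -- one merge step
    have step : ∀ (T : Finset V) (b : V), T ⊆ C → S ⊆ T → T.card ≤ S.card + 2 → b ∈ D →
        ¬ Reach G D d0 S b → Reach G D d0 T b →
        ∃ S' : Finset V, S' ⊆ C ∧ (∀ d ∈ D, Reach G D d0 S' d) ∧ S'.card + 2 ≤ 2 * D.card := by
      intro T b hTC hST hcard hbD hnSb hTb
      have hsub : D.filter (Reach G D d0 S) ⊆ D.filter (Reach G D d0 T) := by
        intro x hx
        exact Finset.mem_filter.2 ⟨(Finset.mem_filter.1 hx).1,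
          ((Finset.mem_filter.1 hx).2).mono hST⟩
      have hbnew : b ∈ D.filter (Reach G D d0 T) := Finset.mem_filter.2 ⟨hbD, hTb⟩
      have hbold : b ∉ D.filter (Reach G D d0 S) := fun h => hnSb (Finset.mem_filter.1 h).2
      have hcards : (D.filter (Reach G D d0 S)).card + 1 ≤ (D.filter (Reach G D d0 T)).card := by
        have hins : insert b (D.filter (Reach G D d0 S)) ⊆ D.filter (Reach G D d0 T) := by
          intro x hx
          rcases Finset.mem_insert.1 hx with rfl | hx
          exacts [hbnew, hsub hx]
        have := Finset.card_le_card hins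
        rwa [Finset.card_insert_of_notMem hbold] at this
      have hmeas : (D \ D.filter (Reach G D d0 T)).card ≤ n := by
        have hsd : D \ D.filter (Reach G D d0 T) ⊆ D \ D.filter (Reach G D d0 S) :=
          Finset.sdiff_subset_sdiff (Finset.Subset.refl D) hsub
        have hbin : b ∈ D \ D.filter (Reach G D d0 S) := Finset.mem_sdiff.2 ⟨hbD, hbold⟩
        have hbnotin : b ∉ D \ D.filter (Reach G D d0 T) := fun h =>
          (Finset.mem_sdiff.1 h).2 hbnew
        have hss : D \ D.filter (Reach G D d0 T) ⊂ D \ D.filter (Reach G D d0 S) :=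
          Finset.ssubset_iff_of_subset hsd |>.2 ⟨b, hbin, hbnotin⟩
        have := Finset.card_lt_card hss
        omega
      exact ih T hTC (hreach0.mono hST) (by omega) hmeas
    -- append helper
    have happ : ∀ (T : Finset V) (a b : V), S ⊆ T → Reach G D d0 S a →
        ∀ (w : G.Walk a b), (∀ x ∈ w.support, x ∈ T ∪ D) → Reach G D d0 T b := by
      intro T a b hST ha w hw
      obtain ⟨pa, hpa⟩ := ha
      refine ⟨pa.append w, fun x hx => ?_⟩
      rw [SimpleGraph.Walk.support_append] at hx
      rcases List.mem_append.1 hx with hx | hx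
      · rcases Finset.mem_union.1 (hpa x hx) with h' | h'
        exacts [Finset.mem_union_left _ (hST h'), Finset.mem_union_right _ h']
      · exact hw x (List.mem_of_mem_tail hx)
    -- minimal walk from reached set to unreached D-vertex
    have hex : ∃ L : ℕ, ∃ a b : V, Reach G D d0 S a ∧ b ∈ D ∧ ¬ Reach G D d0 S b ∧
        ∃ p : G.Walk a b, (∀ x ∈ p.support, x ∈ C ∪ D) ∧ p.length = L := by
      obtain ⟨p, hp⟩ := hwalk b0 hb0D
      exact ⟨p.length, d0, b0, hreach0, hb0D, hb0n, p, hp, rfl⟩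
    obtain ⟨a, b, hra, hbD, hnrb, p, hps, hplen⟩ := Nat.find_spec hex
    have hminw : ∀ (a' b' : V) (q : G.Walk a' b'), Reach G D d0 S a' → b' ∈ D →
        ¬ Reach G D d0 S b' → (∀ x ∈ q.support, x ∈ C ∪ D) → ¬ q.length < Nat.find hex := by
      intro a' b' q h1 h2 h3 h4 hlt
      exact Nat.find_min hex hlt ⟨a', b', h1, h2, h3, q, h4, rfl⟩
    have haSD : a ∈ S ∪ D := by
      obtain ⟨pa, hpa⟩ := hra
      exact hpa a pa.end_mem_support
    cases p with
    | nil => exact absurd hra hnrb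
    | @cons _ c _ h1 q =>
      cases q with
      | nil =>
        -- single edge a–b : then b would be reached, contradiction
        exact absurd (happ S a b (Finset.Subset.refl S) hra (SimpleGraph.Walk.cons h1 SimpleGraph.Walk.nil)
          (by
            intro x hx
            simp only [SimpleGraph.Walk.support_cons, SimpleGraph.Walk.support_nil,
              List.mem_cons, List.mem_singleton] at hx
            rcases hx with rfl | rfl | h
            exacts [haSD, Finset.mem_union_right _ hbD, absurd h (by simp)])) hnrb
      | @cons _ c' _ h2 r =>
        have hplen' : r.length + 2 = Nat.find hex := by
          simpa [SimpleGraph.Walk.length_cons] using hplen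
        have hcCD : c ∈ C ∪ D := hps c (by simp)
        have hcC : c ∈ C := by
          rcases Finset.mem_union.1 hcCD with h | hcD
          · exact h
          by_cases hrc : Reach G D d0 S c
          · exact absurd (by simp only [SimpleGraph.Walk.length_cons] at hplen' ⊢; omega : (SimpleGraph.Walk.cons h2 r).length < Nat.find hex)
              (hminw c b (SimpleGraph.Walk.cons h2 r) hrc hbD hnrb
                (fun x hx => hps x (by simp [SimpleGraph.Walk.support_cons] at hx ⊢; tauto)))
          · exact absurd (by simp only [SimpleGraph.Walk.length_cons, SimpleGraph.Walk.length_nil] at hplen' ⊢; omega : (SimpleGraph.Walk.cons h1 SimpleGraph.Walk.nil).length < Nat.find hex)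
              (hminw a c (SimpleGraph.Walk.cons h1 SimpleGraph.Walk.nil) hra hcD hrc
                (fun x hx => by
                  simp only [SimpleGraph.Walk.support_cons, SimpleGraph.Walk.support_nil,
                    List.mem_cons, List.mem_singleton] at hx
                  rcases hx with rfl | rfl | h
                  · exact hps x (by simp)
                  · exact hcCD
                  · exact absurd h (by simp)))
        cases r with
        | nil =>
          -- p = a, c, b with c ∈ C
          refine step (insert c S) b (Finset.insert_subset hcC hSC) (Finset.subset_insert _ _)
            (by have := Finset.card_insert_le c S; omega) hbD hnrb ?_
          refine happ (insert c S) a b (Finset.subset_insert _ _) hra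
            (SimpleGraph.Walk.cons h1 (SimpleGraph.Walk.cons h2 SimpleGraph.Walk.nil)) ?_
          intro x hx
          simp only [SimpleGraph.Walk.support_cons, SimpleGraph.Walk.support_nil,
            List.mem_cons, List.mem_singleton] at hx
          rcases hx with rfl | rfl | rfl | h
          · rcases Finset.mem_union.1 haSD with h' | h'
            exacts [Finset.mem_union_left _ (Finset.mem_insert_of_mem h'),
              Finset.mem_union_right _ h']
          · exact Finset.mem_union_left _ (Finset.mem_insert_self _ _)
          · exact Finset.mem_union_right _ hbD
          · exact absurd h (by simp)
        | @cons _ c'' _ h3 t =>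
          have hc'CD : c' ∈ C ∪ D := hps c' (by simp)
          have hc'C : c' ∈ C := by
            rcases Finset.mem_union.1 hc'CD with h | hc'D
            · exact h
            by_cases hrc' : Reach G D d0 S c'
            · exact absurd (by simp only [SimpleGraph.Walk.length_cons] at hplen' ⊢; omega : (SimpleGraph.Walk.cons h3 t).length < Nat.find hex)
                (hminw c' b (SimpleGraph.Walk.cons h3 t) hrc' hbD hnrb
                  (fun x hx => hps x (by simp [SimpleGraph.Walk.support_cons] at hx ⊢; tauto)))
            · exact absurd (by simp only [SimpleGraph.Walk.length_cons, SimpleGraph.Walk.length_nil] at hplen' ⊢; omega :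
                  (SimpleGraph.Walk.cons h1 (SimpleGraph.Walk.cons h2 SimpleGraph.Walk.nil)).length
                    < Nat.find hex)
                (hminw a c' (SimpleGraph.Walk.cons h1 (SimpleGraph.Walk.cons h2 SimpleGraph.Walk.nil))
                  hra hc'D hrc'
                  (fun x hx => by
                    simp only [SimpleGraph.Walk.support_cons, SimpleGraph.Walk.support_nil,
                      List.mem_cons, List.mem_singleton] at hx
                    rcases hx with rfl | rfl | rfl | h
                    · exact hps x (by simp)
                    · exact hcCD
                    · exact hc'CD
                    · exact absurd h (by simp)))
          cases t with
          | nil =>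
            -- p = a, c, c', b with c, c' ∈ C
            refine step (insert c (insert c' S)) b
              (Finset.insert_subset hcC (Finset.insert_subset hc'C hSC))
              (Finset.Subset.trans (Finset.subset_insert c' S) (Finset.subset_insert c (insert c' S)))
              (by
                have h1' := Finset.card_insert_le c (insert c' S)
                have h2' := Finset.card_insert_le c' S
                omega) hbD hnrb ?_
            refine happ (insert c (insert c' S)) a b
              (Finset.Subset.trans (Finset.subset_insert c' S) (Finset.subset_insert c (insert c' S))) hra
              (SimpleGraph.Walk.cons h1 (SimpleGraph.Walk.cons h2
                (SimpleGraph.Walk.cons h3 SimpleGraph.Walk.nil))) ?_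
            intro x hx
            simp only [SimpleGraph.Walk.support_cons, SimpleGraph.Walk.support_nil,
              List.mem_cons, List.mem_singleton] at hx
            rcases hx with rfl | rfl | rfl | rfl | h
            · rcases Finset.mem_union.1 haSD with h' | h'
              exacts [Finset.mem_union_left _
                (Finset.mem_insert_of_mem (Finset.mem_insert_of_mem h')),
                Finset.mem_union_right _ h']
            · exact Finset.mem_union_left _ (Finset.mem_insert_self _ _)
            · exact Finset.mem_union_left _
                (Finset.mem_insert_of_mem (Finset.mem_insert_self _ _))
            · exact Finset.mem_union_right _ hbD
            · exact absurd h (by simp)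
          | cons h4 u =>
            -- length ≥ 4 : impossible, use domination of c'
            exfalso
            rcases hD c' with hc'D | ⟨d', hd'D, hadj⟩
            · exact hCD c' hc'C hc'D
            by_cases hrd' : Reach G D d0 S d'
            · refine hminw d' b (SimpleGraph.Walk.cons hadj (SimpleGraph.Walk.cons h3
                (SimpleGraph.Walk.cons h4 u))) hrd' hbD hnrb ?_ (by
                  simp only [SimpleGraph.Walk.length_cons] at hplen' ⊢
                  omega)
              intro x hx
              simp only [SimpleGraph.Walk.support_cons, List.mem_cons] at hx
              rcases hx with rfl | hx
              · exact Finset.mem_union_right _ hd'D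
              · exact hps x (by simp [SimpleGraph.Walk.support_cons]; tauto)
            · refine hminw a d' (SimpleGraph.Walk.cons h1 (SimpleGraph.Walk.cons h2
                (SimpleGraph.Walk.cons hadj.symm SimpleGraph.Walk.nil))) hra hd'D hrd' ?_ (by
                  simp only [SimpleGraph.Walk.length_cons, SimpleGraph.Walk.length_nil] at hplen' ⊢
                  omega)
              intro x hx
              simp only [SimpleGraph.Walk.support_cons, SimpleGraph.Walk.support_nil,
                List.mem_cons, List.mem_singleton] at hx
              rcases hx with rfl | rfl | rfl | rfl | h
              · exact hps x (by simp)
              · exact hcCD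
              · exact hc'CD
              · exact Finset.mem_union_right _ hd'D
              · exact absurd h (by simp)

theorem stmt2 {V : Type*} [Fintype V] [DecidableEq V] (G : SimpleGraph V)
    (hG : G.Connected) (D C : Finset V)
    -- `D` is a dominating set of `G`
    (hD : ∀ v : V, v ∈ D ∨ ∃ u ∈ D, G.Adj u v)
    -- `C ⊆ V \ D`
    (hCD : ∀ v ∈ C, v ∉ D)
    -- `G[C ∪ D]` is connected
    (hconn : (G.induce (↑(C ∪ D) : Set V)).Connected)
    -- `C` is inclusion-minimal with this property
    (hmin : ∀ C' : Finset V, C' ⊂ C → ¬ (G.induce (↑(C' ∪ D) : Set V)).Connected) :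
    C.card ≤ 2 * D.card := by
  classical
  rcases D.eq_empty_or_nonempty with rfl | ⟨d0, hd0⟩
  · have hC : C = ∅ := Finset.eq_empty_of_forall_notMem fun v hv => by
      rcases hD v with h | ⟨u, hu, _⟩
      · exact Finset.notMem_empty v h
      · exact Finset.notMem_empty u hu
    simp [hC]
  · have hwalk : ∀ b ∈ D, ∃ p : G.Walk d0 b, ∀ x ∈ p.support, x ∈ C ∪ D := by
      intro b hb
      obtain ⟨p, hp⟩ := lemB G (↑(C ∪ D)) hconn d0 b (by simp [hd0]) (by simp [hb])
      exact ⟨p, fun x hx => by simpa using hp x hx⟩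
    obtain ⟨S', hS'C, hS'reach, hS'card⟩ := aux G D C d0 hd0 hD hCD hwalk
    have hfull : ∀ v ∈ (↑(S' ∪ D) : Set V), ∃ p : G.Walk d0 v,
        ∀ x ∈ p.support, x ∈ (↑(S' ∪ D) : Set V) := by
      intro v hv
      have hv' : v ∈ S' ∪ D := by simpa using hv
      rcases Finset.mem_union.1 hv' with hvS | hvD
      · rcases hD v with hvD | ⟨u, huD, hadj⟩
        · exact absurd hvD (hCD v (hS'C hvS))
        · obtain ⟨p, hp⟩ := hS'reach u huD
          refine ⟨p.concat hadj, fun x hx => ?_⟩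
          have hx' : x ∈ p.support ∨ x = v := by
            simpa [SimpleGraph.Walk.support_concat, List.concat_eq_append] using hx
          rcases hx' with hx | rfl
          · simpa using hp x hx
          · simpa using hv'
      · obtain ⟨p, hp⟩ := hS'reach v hvD
        exact ⟨p, fun x hx => by simpa using hp x hx⟩
    have hconn' : (G.induce (↑(S' ∪ D) : Set V)).Connected :=
      lemA G _ d0 (by simp [hd0]) hfull
    have hSC : S' = C := by
      by_contra hne
      exact hmin S' (Finset.ssubset_iff_subset_ne.2 ⟨hS'C, hne⟩) hconn'
    subst hSC
    omega
end

section
/- Let T be a finite tree whose vertex set is partitioned into two sets A and B. Suppose that every leaf of T belongs to A, and that every vertex of B has a neighbor (in T) belonging to A. Then |B| ≤ 2|A|. -/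
open Finset

theorem stmt3 {V : Type*} [Fintype V] [DecidableEq V] (G : SimpleGraph V)
    [DecidableRel G.Adj]
    -- `G` is a tree
    (hT : G.IsTree)
    -- the vertex set is partitioned into `A` and `B`
    (A B : Finset V) (hpart : A ∪ B = Finset.univ) (hdisj : Disjoint A B)
    -- every leaf (vertex of degree at most 1) belongs to `A`
    (hleaf : ∀ v : V, G.degree v ≤ 1 → v ∈ A)
    -- every vertex of `B` has a neighbor in `A`
    (hB : ∀ v ∈ B, ∃ u ∈ A, G.Adj v u) :
    B.card ≤ 2 * A.card := by
  classical
  -- degree sum formula and tree edge count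
  have hsum : ∑ v, G.degree v = 2 * G.edgeFinset.card :=
    G.sum_degrees_eq_twice_card_edges
  have hedge : G.edgeFinset.card + 1 = Fintype.card V := hT.card_edgeFinset
  have hcardV : A.card + B.card = Fintype.card V := by
    rw [← Finset.card_union_of_disjoint hdisj, hpart, Finset.card_univ]
  -- split the sum over the partition
  have hsplit : ∑ v, G.degree v = ∑ v ∈ A, G.degree v + ∑ v ∈ B, G.degree v := by
    rw [← Finset.sum_union hdisj, hpart]
  -- every vertex of B has degree ≥ 2
  have hdegB : ∀ v ∈ B, 2 ≤ G.degree v := by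
    intro v hv
    by_contra h
    push_neg at h
    have : v ∈ A := hleaf v (by omega)
    exact (Finset.disjoint_left.mp hdisj this) hv
  have hBsum : 2 * B.card ≤ ∑ v ∈ B, G.degree v := by
    calc 2 * B.card = ∑ _v ∈ B, 2 := by rw [Finset.sum_const, smul_eq_mul, mul_comm]
    _ ≤ ∑ v ∈ B, G.degree v := Finset.sum_le_sum hdegB
  -- sum of degrees over A is at least |B|
  have hAsum : B.card ≤ ∑ v ∈ A, G.degree v := by
    have hsub : B ⊆ A.biUnion (fun u => G.neighborFinset u ∩ B) := by
      intro v hv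
      obtain ⟨u, hu, hadj⟩ := hB v hv
      exact Finset.mem_biUnion.mpr ⟨u, hu, Finset.mem_inter.mpr
        ⟨(SimpleGraph.mem_neighborFinset G u v).mpr hadj.symm, hv⟩⟩
    calc B.card ≤ (A.biUnion (fun u => G.neighborFinset u ∩ B)).card :=
          Finset.card_le_card hsub
      _ ≤ ∑ u ∈ A, (G.neighborFinset u ∩ B).card := Finset.card_biUnion_le
      _ ≤ ∑ u ∈ A, G.degree u := by
          apply Finset.sum_le_sum
          intro u _
          exact Finset.card_le_card (Finset.inter_subset_left)
  omega
end

section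
/- Let G be a finite connected simple graph on n vertices with m ≥ 2 edges, and let D̃ ⊆ V be a nonempty set of vertices such that the induced subgraph G[D̃] is disconnected. Assign to each edge of G the weight 1 if both its endpoints lie in D̃, and the weight m otherwise. Then every spanning tree of G has total weight strictly greater than (|D̃| − 1) + m · (n − |D̃|). -/
open Finset

/-- The weight of an edge: `1` if both endpoints lie in `Dt`, and `m` otherwise. -/
def edgeWeight {V : Type*} [DecidableEq V] (Dt : Finset V) (m : ℕ) : Sym2 V → ℕ :=
  Sym2.lift ⟨fun a b => if a ∈ Dt ∧ b ∈ Dt then 1 else m,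
    fun a b => by simp only [and_comm]⟩

section Aux
variable {W : Type*}

lemma aux_addEdge_acyclic (H : SimpleGraph W) (hH : H.IsAcyclic) {u v : W}
    (huv : u ≠ v) (hr : ¬ H.Reachable u v) :
    (H ⊔ SimpleGraph.fromEdgeSet {s(u, v)}).IsAcyclic := by
  classical
  intro w c hc
  by_cases he : s(u, v) ∈ c.edges
  · have hadj := SimpleGraph.adj_and_reachable_delete_edges_iff_exists_cycle.mpr ⟨w, c, hc, he⟩
    apply hr
    refine hadj.2.mono ?_
    intro a b hab
    simp only [SimpleGraph.deleteEdges_adj, SimpleGraph.sup_adj, SimpleGraph.fromEdgeSet_adj,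
      Set.mem_singleton_iff] at hab
    tauto
  · have hsub : ∀ e ∈ c.edges, e ∈ H.edgeSet := by
      intro e hce
      have h2 := c.edges_subset_edgeSet hce
      rw [SimpleGraph.edgeSet_sup, SimpleGraph.edgeSet_fromEdgeSet] at h2
      rcases h2 with h2 | h2
      · exact h2
      · exfalso
        apply he
        rw [Set.mem_diff, Set.mem_singleton_iff] at h2
        exact h2.1 ▸ hce
    exact hH (c.transfer H hsub) (hc.transfer hsub)

lemma aux_exists_tree_ge [Fintype W] [Nonempty W] :
    ∀ k (H : SimpleGraph W), H.IsAcyclic →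
      Fintype.card (Sym2 W) - H.edgeSet.ncard ≤ k → ∃ T, H ≤ T ∧ T.IsTree := by
  intro k
  induction k using Nat.strong_induction_on with
  | _ k ih =>
    intro H hH hk
    by_cases hc : H.Connected
    · exact ⟨H, le_rfl, ⟨hc, hH⟩⟩
    · have hpre : ¬ H.Preconnected := fun h => hc ⟨h⟩
      rw [SimpleGraph.Preconnected] at hpre
      push_neg at hpre
      obtain ⟨u, v, hr⟩ := hpre
      have huv : u ≠ v := by rintro rfl; exact hr (SimpleGraph.Reachable.refl u)
      set H' := H ⊔ SimpleGraph.fromEdgeSet {s(u, v)} with hH'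
      have hac := aux_addEdge_acyclic H hH huv hr
      have hEs : H'.edgeSet = insert s(u, v) H.edgeSet := by
        rw [hH']
        ext e
        simp only [SimpleGraph.edgeSet_sup, SimpleGraph.edgeSet_fromEdgeSet, Set.mem_union,
          Set.mem_diff, Set.mem_singleton_iff, Set.mem_insert_iff, Set.mem_setOf_eq]
        constructor
        · rintro (h | ⟨rfl, -⟩)
          · exact Or.inr h
          · exact Or.inl rfl
        · rintro (rfl | h)
          · exact Or.inr ⟨rfl, fun hd => huv (Sym2.mk_isDiag_iff.mp hd)⟩
          · exact Or.inl h
      have hnm : s(u, v) ∉ H.edgeSet := fun h =>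
        hr (SimpleGraph.Adj.reachable ((SimpleGraph.mem_edgeSet H).mp h))
      have hcard : H'.edgeSet.ncard = H.edgeSet.ncard + 1 := by
        rw [hEs, Set.ncard_insert_of_notMem hnm (Set.toFinite _)]
      have hle : H'.edgeSet.ncard ≤ Fintype.card (Sym2 W) := by
        have := Set.ncard_le_ncard (Set.subset_univ H'.edgeSet) (Set.toFinite _)
        rwa [Set.ncard_univ, Nat.card_eq_fintype_card] at this
      have hmeas : Fintype.card (Sym2 W) - H'.edgeSet.ncard < k := by omega
      obtain ⟨T, hT1, hT2⟩ := ih _ hmeas H' hac le_rfl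
      exact ⟨T, le_trans le_sup_left hT1, hT2⟩

lemma aux_card_le [Fintype W] [Nonempty W] (H : SimpleGraph W) (hH : H.IsAcyclic) :
    H.edgeSet.ncard + 1 ≤ Fintype.card W := by
  classical
  obtain ⟨T, hle, hT⟩ := aux_exists_tree_ge _ H hH le_rfl
  have hsub : H.edgeSet ⊆ T.edgeSet := SimpleGraph.edgeSet_mono hle
  have h1 : H.edgeSet.ncard ≤ T.edgeSet.ncard := Set.ncard_le_ncard hsub (Set.toFinite _)
  haveI : Fintype T.edgeSet := (Set.toFinite _).fintype
  have h2 : T.edgeSet.ncard + 1 = Fintype.card W := by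
    rw [Set.ncard_eq_toFinset_card']
    exact hT.card_edgeFinset
  omega

lemma aux_disconnected_card [Fintype W] [Nonempty W] (H : SimpleGraph W)
    (hH : H.IsAcyclic) (hnc : ¬ H.Connected) :
    H.edgeSet.ncard + 2 ≤ Fintype.card W := by
  have hpre : ¬ H.Preconnected := fun h => hnc ⟨h⟩
  rw [SimpleGraph.Preconnected] at hpre
  push_neg at hpre
  obtain ⟨u, v, hr⟩ := hpre
  have huv : u ≠ v := by rintro rfl; exact hr (SimpleGraph.Reachable.refl u)
  have hac := aux_addEdge_acyclic H hH huv hr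
  have hbound := aux_card_le _ hac
  have hEs : (H ⊔ SimpleGraph.fromEdgeSet {s(u, v)}).edgeSet = insert s(u, v) H.edgeSet := by
    ext e
    simp only [SimpleGraph.edgeSet_sup, SimpleGraph.edgeSet_fromEdgeSet, Set.mem_union,
      Set.mem_diff, Set.mem_singleton_iff, Set.mem_insert_iff, Set.mem_setOf_eq]
    constructor
    · rintro (h | ⟨rfl, -⟩)
      · exact Or.inr h
      · exact Or.inl rfl
    · rintro (rfl | h)
      · exact Or.inr ⟨rfl, fun hd => huv (Sym2.mk_isDiag_iff.mp hd)⟩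
      · exact Or.inl h
  have hnm : s(u, v) ∉ H.edgeSet := fun h =>
    hr (SimpleGraph.Adj.reachable ((SimpleGraph.mem_edgeSet H).mp h))
  rw [hEs, Set.ncard_insert_of_notMem hnm (Set.toFinite _)] at hbound
  omega

end Aux

theorem stmt5 {V : Type*} [Fintype V] [DecidableEq V] (G : SimpleGraph V)
    [DecidableRel G.Adj]
    (hG : G.Connected) (hm : 2 ≤ G.edgeFinset.card)
    (Dt : Finset V) (hne : Dt.Nonempty)
    -- `G[D̃]` is disconnected
    (hdisc : ¬ (G.induce (↑Dt : Set V)).Connected) :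
    -- every spanning tree of `G` has total weight strictly greater
    -- than `(|D̃| − 1) + m·(n − |D̃|)`
    ∀ T : SimpleGraph V, T ≤ G → T.IsTree →
      (Dt.card - 1) + G.edgeFinset.card * (Fintype.card V - Dt.card) <
        ∑ e ∈ T.edgeSet.toFinite.toFinset, edgeWeight Dt G.edgeFinset.card e := by
  classical
  intro T hTG hT
  set m := G.edgeFinset.card with hmdef
  have hm1 : m ≠ 1 := by omega
  have hw1 : ∀ x y : V, x ∈ Dt → y ∈ Dt → edgeWeight Dt m s(x, y) = 1 := by
    intro x y hx hy
    simp [edgeWeight, hx, hy]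
  have hw2 : ∀ e : Sym2 V, edgeWeight Dt m e ≠ 1 → edgeWeight Dt m e = m := by
    refine Sym2.ind ?_
    intro x y h
    by_cases hxy : x ∈ Dt ∧ y ∈ Dt
    · exact absurd (by simp [edgeWeight, hxy]) h
    · simp [edgeWeight, hxy]
  have hw3 : ∀ x y : V, edgeWeight Dt m s(x, y) = 1 → x ∈ Dt ∧ y ∈ Dt := by
    intro x y h
    by_contra hxy
    rw [show edgeWeight Dt m s(x, y) = if x ∈ Dt ∧ y ∈ Dt then 1 else m from rfl] at h
    rw [if_neg hxy] at h
    exact hm1 h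
  -- the induced forest on Dt
  set D : Set V := (↑Dt : Set V) with hD
  haveI : Nonempty ↑D := (Finset.coe_nonempty.mpr hne).to_subtype
  set H : SimpleGraph ↑D := T.induce D with hHdef
  have hHac : H.IsAcyclic := by
    intro w c hc
    exact hT.2 (c.map (SimpleGraph.Embedding.induce (G := T) D).toHom)
      ((SimpleGraph.Walk.map_isCycle_iff_of_injective
        (SimpleGraph.Embedding.induce (G := T) D).injective).mpr hc)
  have hHle : H ≤ G.induce D := fun a b hab => by
    simp only [SimpleGraph.comap_adj] at hab ⊢
    exact hTG hab
  have hHnc : ¬ H.Connected := fun h => hdisc (h.mono hHle)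
  have hbound := aux_disconnected_card H hHac hHnc
  have hcardD : Fintype.card ↑D = Dt.card := by
    rw [← Nat.card_eq_fintype_card, Nat.card_coe_set_eq, hD, Set.ncard_coe_finset]
  -- edge counting
  haveI : Fintype T.edgeSet := (Set.toFinite _).fintype
  set S : Finset (Sym2 V) := T.edgeSet.toFinite.toFinset with hSdef
  have hS : S = T.edgeFinset := by
    ext e
    simp only [hSdef, Set.Finite.mem_toFinset, SimpleGraph.mem_edgeFinset]
  have hScard : S.card + 1 = Fintype.card V := by rw [hS]; exact hT.card_edgeFinset
  set p : Sym2 V → Prop := fun e => edgeWeight Dt m e = 1 with hpdef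
  set a := (S.filter p).card with hadef
  set b := (S.filter (fun e => ¬ p e)).card with hbdef
  have hab : a + b = S.card := Finset.card_filter_add_card_filter_not p
  -- the image of the edges of H is exactly the filtered set
  have himg : Sym2.map (Subtype.val : ↑D → V) '' H.edgeSet = ↑(S.filter p) := by
    ext e
    simp only [Finset.coe_filter, Set.mem_setOf_eq, Set.mem_image, hSdef,
      Set.Finite.mem_toFinset]
    constructor
    · rintro ⟨e', he', rfl⟩
      induction e' using Sym2.ind with
      | _ x y =>
        rw [SimpleGraph.mem_edgeSet] at he'
        have hadj : T.Adj ↑x ↑y := by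
          exact he'
        refine ⟨hadj, ?_⟩
        rw [Sym2.map_pair_eq, hpdef]
        exact hw1 _ _ x.2 y.2
    · intro he
      induction e using Sym2.ind with
      | _ x y =>
        obtain ⟨hadj, hp⟩ := he
        rw [SimpleGraph.mem_edgeSet] at hadj
        obtain ⟨hx, hy⟩ := hw3 x y hp
        refine ⟨s(⟨x, hx⟩, ⟨y, hy⟩), ?_, ?_⟩
        · rw [SimpleGraph.mem_edgeSet]
          exact hadj
        · rw [Sym2.map_pair_eq]
  have hinj : Function.Injective (Sym2.map (Subtype.val : ↑D → V)) :=
    Sym2.map.injective Subtype.val_injective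
  have hacard : a + 2 ≤ Dt.card := by
    have h1 : (Sym2.map (Subtype.val : ↑D → V) '' H.edgeSet).ncard = H.edgeSet.ncard :=
      Set.ncard_image_of_injective _ hinj
    rw [himg, Set.ncard_coe_finset] at h1
    omega
  have hdn : Dt.card ≤ Fintype.card V := Finset.card_le_univ Dt
  have hsum : ∑ e ∈ S, edgeWeight Dt m e = a + b * m := by
    rw [← Finset.sum_filter_add_sum_filter_not S p]
    congr 1
    · rw [Finset.sum_congr rfl (fun e he => (Finset.mem_filter.mp he).2), Finset.sum_const,
        smul_eq_mul, mul_one]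
    · rw [Finset.sum_congr rfl (fun e he => hw2 e (Finset.mem_filter.mp he).2),
        Finset.sum_const, smul_eq_mul]
  rw [hsum]
  have hb : (Fintype.card V - Dt.card) + 1 ≤ b := by omega
  obtain ⟨K, hK⟩ : ∃ K, m = K + 1 := ⟨m - 1, by omega⟩
  have hKb : K * ((Fintype.card V - Dt.card) + 1) ≤ K * b := Nat.mul_le_mul_left K hb
  have e1 : m * (Fintype.card V - Dt.card) =
      K * (Fintype.card V - Dt.card) + (Fintype.card V - Dt.card) := by rw [hK]; ring
  have e2 : b * m = K * b + b := by rw [hK]; ring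
  have hKb' : K * (Fintype.card V - Dt.card) + K ≤ K * b := by
    calc K * (Fintype.card V - Dt.card) + K = K * ((Fintype.card V - Dt.card) + 1) := by ring
      _ ≤ K * b := hKb
  rw [e1, e2]
  revert hKb'
  generalize K * (Fintype.card V - Dt.card) = P
  generalize K * b = Q
  intro hKb'
  omega
end

section
/- Let G be a finite connected simple graph, let D be a dominating set of G, and let D̃ be a set of vertices with D ⊆ D̃ such that the induced subgraph G[D̃] is disconnected. Then there exist vertices u and v lying in two distinct connected components of G[D̃] such that the distance between u and v in G is at most 3 (equivalently, u and v can be joined by a path of G with at most 2 internal vertices, so adding at most 2 vertices to D̃ connects two of its components). -/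
open Finset

private lemma stmt7_aux {V : Type*} {G : SimpleGraph V} (hG : G.Connected) (x y : V)
    (h : 2 ≤ G.dist x y) :
    ∃ w : V, G.dist x w ≤ 2 ∧ G.dist w y + 2 ≤ G.dist x y := by
  obtain ⟨p, hp⟩ := hG.exists_walk_length_eq_dist x y
  cases p with
  | nil => simp at hp; simp [SimpleGraph.dist_self] at h
  | cons h1 q1 =>
    cases q1 with
    | nil => simp at hp; omega
    | @cons _ w _ h2 q =>
      simp only [SimpleGraph.Walk.length_cons] at hp
      refine ⟨w, ?_, ?_⟩
      · calc G.dist x w ≤ (SimpleGraph.Walk.cons h1 (SimpleGraph.Walk.cons h2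
            SimpleGraph.Walk.nil)).length := SimpleGraph.dist_le _
          _ = 2 := by simp
      · have := SimpleGraph.dist_le q
        omega

theorem stmt7 {V : Type*} [Fintype V] [DecidableEq V] (G : SimpleGraph V)
    (hG : G.Connected) (D Dt : Finset V)
    -- `D` is a dominating set of `G`
    (hD : ∀ v : V, v ∈ D ∨ ∃ u ∈ D, G.Adj u v)
    -- `D ⊆ D̃`
    (hDDt : D ⊆ Dt)
    -- `G[D̃]` is disconnected
    (hdisc : ¬ (G.induce (↑Dt : Set V)).Connected) :
    -- there are vertices `u, v` in distinct components of `G[D̃]`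
    -- at distance at most `3` in `G`
    ∃ u v : (↑Dt : Set V), ¬ (G.induce (↑Dt : Set V)).Reachable u v ∧
      G.dist ↑u ↑v ≤ 3 := by
  classical
  obtain ⟨v0⟩ := hG.nonempty
  have hDne : ∃ d, d ∈ D := by
    rcases hD v0 with h | ⟨u, hu, _⟩
    · exact ⟨v0, h⟩
    · exact ⟨u, hu⟩
  obtain ⟨d0, hd0⟩ := hDne
  have hNe : Nonempty (↑Dt : Set V) := ⟨⟨d0, by exact_mod_cast hDDt hd0⟩⟩
  have hpre : ¬ (G.induce (↑Dt : Set V)).Preconnected := fun h => hdisc ⟨h⟩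
  rw [SimpleGraph.Preconnected] at hpre
  push_neg at hpre
  obtain ⟨a, b, hab⟩ := hpre
  -- minimize the distance over unreachable pairs
  set S : Set ℕ := {n | ∃ x y : (↑Dt : Set V),
      ¬ (G.induce (↑Dt : Set V)).Reachable x y ∧ G.dist ↑x ↑y = n} with hS
  have hSne : S.Nonempty := ⟨_, a, b, hab, rfl⟩
  obtain ⟨u, v, huv, hm⟩ := Nat.sInf_mem hSne
  refine ⟨u, v, huv, ?_⟩
  by_contra h4
  push_neg at h4
  have h4' : 4 ≤ G.dist (↑u) (↑v) := h4
  have hmin : ∀ x y : (↑Dt : Set V), ¬ (G.induce (↑Dt : Set V)).Reachable x y →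
      G.dist (↑u) (↑v) ≤ G.dist ↑x ↑y := by
    intro x y hxy
    rw [hm]
    exact Nat.sInf_le ⟨x, y, hxy, rfl⟩
  obtain ⟨w, huw, hwv2⟩ := stmt7_aux hG (↑u) (↑v) (by omega)
  obtain ⟨d, hdD, hdw⟩ : ∃ d ∈ Dt, G.dist d w ≤ 1 := by
    rcases hD w with hw | ⟨d, hd, hadj⟩
    · exact ⟨w, hDDt hw, by simp [SimpleGraph.dist_self]⟩
    · refine ⟨d, hDDt hd, ?_⟩
      calc G.dist d w ≤ (hadj.toWalk).length := SimpleGraph.dist_le _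
        _ = 1 := by simp
  have hdDt : (d : V) ∈ (↑Dt : Set V) := by exact_mod_cast hdD
  set d' : (↑Dt : Set V) := ⟨d, hdDt⟩ with hd'
  have hud : G.dist (↑u) (↑d') ≤ 3 := by
    calc G.dist (↑u) (↑d') ≤ G.dist (↑u) w + G.dist w (↑d') := hG.dist_triangle
      _ ≤ 2 + 1 := by
          have := SimpleGraph.dist_comm (G := G) (u := d) (v := w) ▸ hdw
          exact Nat.add_le_add huw this
      _ = 3 := rfl
  have hdv : G.dist (↑d') (↑v) ≤ G.dist (↑u) (↑v) - 1 := by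
    calc G.dist (↑d') (↑v) ≤ G.dist (↑d') w + G.dist w (↑v) := hG.dist_triangle
      _ ≤ 1 + G.dist w (↑v) := Nat.add_le_add hdw le_rfl
      _ ≤ G.dist (↑u) (↑v) - 1 := by omega
  have r1 : (G.induce (↑Dt : Set V)).Reachable u d' := by
    by_contra hr
    have := hmin u d' hr
    omega
  have r2 : (G.induce (↑Dt : Set V)).Reachable d' v := by
    by_contra hr
    have := hmin d' v hr
    omega
  exact huv (r1.trans r2)
end

section
/- Let G be a finite simple graph, let D be a dominating set of G, and let C ⊆ V \ D be such that the induced subgraph G[C ∪ D] is connected. Then the following are equivalent: (i) C is inclusion-minimal such that G[C ∪ D] is connected (no proper subset C' ⊊ C satisfies that G[C' ∪ D] is connected); (ii) every vertex v ∈ C is an articulation point of G[C ∪ D], i.e., for every v ∈ C the induced subgraph G[(C \ {v}) ∪ D] is disconnected. -/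
open Finset

/-- If `A ⊆ B` and every vertex of `B` is in `A` or adjacent to a vertex of `A`,
then connectivity of `G.induce A` gives connectivity of `G.induce B`. -/
lemma stmt12_aux {V : Type*} (G : SimpleGraph V) (A B : Set V) (hAB : A ⊆ B)
    (hdom : ∀ v ∈ B, v ∈ A ∨ ∃ u ∈ A, G.Adj u v)
    (hA : (G.induce A).Connected) : (G.induce B).Connected := by
  obtain ⟨⟨u, hu⟩⟩ := hA.nonempty
  apply G.induce_connected_of_patches u (hAB hu)
  intro v hv
  rcases hdom v hv with hvA | ⟨w, hwA, hadj⟩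
  · exact ⟨A, hAB, hu, hvA, hA.preconnected _ _⟩
  · refine ⟨insert v A, Set.insert_subset hv hAB, Set.mem_insert_iff.2 (Or.inr hu),
      Set.mem_insert v A, ?_⟩
    have h1 : (G.induce (insert v A)).Reachable ⟨u, Set.mem_insert_iff.2 (Or.inr hu)⟩
        ⟨w, Set.mem_insert_iff.2 (Or.inr hwA)⟩ :=
      (hA.preconnected ⟨u, hu⟩ ⟨w, hwA⟩).map
        (G.induceHomOfLE (Set.subset_insert v A)).toHom
    exact h1.trans (SimpleGraph.Adj.reachable (by exact hadj))

theorem stmt12 {V : Type*} [Fintype V] [DecidableEq V] (G : SimpleGraph V)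
    (D C : Finset V)
    -- `D` is a dominating set of `G`
    (hD : ∀ v : V, v ∈ D ∨ ∃ u ∈ D, G.Adj u v)
    -- `C ⊆ V \ D`
    (hCD : ∀ v ∈ C, v ∉ D)
    -- `G[C ∪ D]` is connected
    (hconn : (G.induce (↑(C ∪ D) : Set V)).Connected) :
    -- (i) `C` is inclusion-minimal such that `G[C ∪ D]` is connected, iff
    -- (ii) every `v ∈ C` is an articulation point of `G[C ∪ D]`
    ((∀ C' : Finset V, C' ⊂ C → ¬ (G.induce (↑(C' ∪ D) : Set V)).Connected) ↔
      (∀ v ∈ C, ¬ (G.induce (↑(C.erase v ∪ D) : Set V)).Connected)) := by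
  constructor
  · intro h v hv
    exact h (C.erase v) (Finset.erase_ssubset hv)
  · intro h C' hC' hc
    obtain ⟨v, hvC, hvC'⟩ := Finset.exists_of_ssubset hC'
    apply h v hvC
    apply stmt12_aux G (↑(C' ∪ D)) (↑(C.erase v ∪ D))
    · intro x hx
      simp only [Finset.coe_union, Set.mem_union, Finset.mem_coe] at hx ⊢
      rcases hx with hx | hx
      · exact Or.inl (Finset.mem_erase.2 ⟨fun he => hvC' (he ▸ hx), hC'.subset hx⟩)
      · exact Or.inr hx
    · intro x hx
      rcases hD x with hxD | ⟨u, huD, hadj⟩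
      · exact Or.inl (by simp [hxD])
      · exact Or.inr ⟨u, by simp [huD], hadj⟩
    · exact hc
end
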